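/- Let A₁, A₂ be independent exponential random variables with mean γ_D > 0, let B₁, B₂ be independent exponential random variables with mean γ_E > 0, with (A₁,A₂) independent of (B₁,B₂), and set X = A₁ + A₂ and Y = B₁ + B₂. Let ξ > 1. Then P(X < ξ(1+Y) − 1) = 1 − (γ_D/(γ_D + ξ γ_E)³) · e^{−(ξ−1)/γ_D} · [γ_D(ξ − 1 + γ_D) + ξ γ_E(ξ − 1 + 3γ_D)]. With ξ = 2^{2R_s}, this is the secrecy outage probability of the two-source decode-and-forward scheme with partial CSI and error-free intersource channels. -/

import Mathlib

/-!
Given `Y = B₁ + B₂ = y ≥ 0`, the outage event fails iff `X = A₁ + A₂ ≥ t` with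
`t = (ξ - 1) + ξ y ≥ 0`, and for the Erlang law of `X` (rate `r = 1/γ_D`) this has probability
`e^{-r t} (1 + r t)`. This is an affine function of `y` times `e^{-r ξ y}`, and averaging such a
function over the Erlang law of `Y` (rate `q = 1/γ_E`) is a Laplace-transform computation:
`E[(α + β Y) e^{-s Y}] = (q / (q + s))² (α + 2β / (q + s))`.
-/

open MeasureTheory ProbabilityTheory Real Set

lemma lintegral_Ici_rpow_mul_exp_neg_mul {a c : ℝ} (ha : 0 < a) (hc : 0 < c) :
    ∫⁻ x in Ici 0, ENNReal.ofReal (x ^ (a - 1) * exp (-(c * x)))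
      = ENNReal.ofReal ((1 / c) ^ a * Gamma a) := by
  have hint := integral_rpow_mul_exp_neg_mul_Ioi ha hc
  rw [← setLIntegral_congr Ioi_ae_eq_Ici, ← hint, ofReal_integral_eq_lintegral_ofReal]
  · exact .of_integral_ne_zero (by rw [hint]; positivity)
  · filter_upwards [ae_restrict_mem measurableSet_Ioi] with x (hx : 0 < x)
    positivity

lemma map_prodMk_prodMk_eq_prod_of_indepFun {Ω α₁ α₂ β₁ β₂ : Type*} [MeasurableSpace Ω]
    [MeasurableSpace α₁] [MeasurableSpace α₂] [MeasurableSpace β₁] [MeasurableSpace β₂]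
    {P : Measure Ω} [IsFiniteMeasure P] {X₁ : Ω → α₁} {X₂ : Ω → α₂} {Y₁ : Ω → β₁}
    {Y₂ : Ω → β₂} (hX₁ : AEMeasurable X₁ P) (hX₂ : AEMeasurable X₂ P) (hY₁ : AEMeasurable Y₁ P)
    (hY₂ : AEMeasurable Y₂ P) (hX : IndepFun X₁ X₂ P) (hY : IndepFun Y₁ Y₂ P)
    (hXY : IndepFun (fun ω ↦ (X₁ ω, X₂ ω)) (fun ω ↦ (Y₁ ω, Y₂ ω)) P) :
    P.map (fun ω ↦ ((X₁ ω, X₂ ω), (Y₁ ω, Y₂ ω)))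
      = ((P.map X₁).prod (P.map X₂)).prod ((P.map Y₁).prod (P.map Y₂)) := by
  rw [(indepFun_iff_map_prod_eq_prod_map_map (hX₁.prodMk hX₂) (hY₁.prodMk hY₂)).mp hXY,
    (indepFun_iff_map_prod_eq_prod_map_map hX₁ hX₂).mp hX,
    (indepFun_iff_map_prod_eq_prod_map_map hY₁ hY₂).mp hY]

section ExpMeasure

variable {r : ℝ}

lemma ae_nonneg_expMeasure : ∀ᵐ x ∂expMeasure r, 0 ≤ x := by
  rw [expMeasure, gammaMeasure,
    ae_withDensity_iff (f := gammaPDF 1 r) (measurable_gammaPDFReal 1 r).ennreal_ofReal]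
  filter_upwards with x hx
  by_contra hneg
  exact hx (gammaPDF_of_neg (not_le.mp hneg))

lemma ae_nonneg_prod_expMeasure (hr : 0 < r) :
    ∀ᵐ y ∂(expMeasure r).prod (expMeasure r), 0 ≤ y.1 ∧ 0 ≤ y.2 := by
  have := isProbabilityMeasure_expMeasure hr
  rw [Measure.ae_prod_iff_ae_ae (p := fun y : ℝ × ℝ ↦ 0 ≤ y.1 ∧ 0 ≤ y.2)
    ((measurableSet_le measurable_const measurable_fst).inter
      (measurableSet_le measurable_const measurable_snd))]
  filter_upwards [ae_nonneg_expMeasure] with x hx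
  filter_upwards [ae_nonneg_expMeasure] with y hy using ⟨hx, hy⟩

lemma lintegral_expMeasure (f : ℝ → ENNReal) :
    ∫⁻ x, f x ∂expMeasure r = ∫⁻ x in Ici 0, ENNReal.ofReal (r * exp (-(r * x))) * f x := by
  rw [expMeasure, gammaMeasure,
    lintegral_withDensity_eq_lintegral_mul_non_measurable _ (f := gammaPDF 1 r)
      (measurable_gammaPDFReal 1 r).ennreal_ofReal (ae_of_all _ fun _ ↦ ENNReal.ofReal_lt_top),
    ← lintegral_add_compl _ measurableSet_Ici, compl_Ici,
    setLIntegral_congr_fun measurableSet_Iio fun x hx ↦ by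
      rw [Pi.mul_apply, gammaPDF_of_neg hx, zero_mul],
    lintegral_zero, add_zero]
  exact setLIntegral_congr_fun measurableSet_Ici fun x hx ↦ by
    rw [Pi.mul_apply]
    exact congrArg (· * f x) (exponentialPDF_of_nonneg hx)

lemma expMeasure_Ici (hr : 0 < r) (z : ℝ) :
    expMeasure r (Ici z) = ENNReal.ofReal (exp (-(r * max z 0))) := by
  have := isProbabilityMeasure_expMeasure hr
  have hIio :
      expMeasure r (Iio z) = ENNReal.ofReal (if 0 ≤ z then 1 - exp (-(r * z)) else 0) := by
    rw [expMeasure, gammaMeasure, withDensity_apply _ measurableSet_Iio,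
      setLIntegral_congr Iio_ae_eq_Iic]
    exact lintegral_exponentialPDF_eq_antiDeriv hr z
  rw [← compl_Iio, prob_compl_eq_one_sub measurableSet_Iio, hIio]
  split_ifs with hz
  · rw [max_eq_left hz, ← ENNReal.ofReal_one, ← ENNReal.ofReal_sub _ (by simp; positivity),
      sub_sub_cancel]
  · simp [max_eq_right (not_le.mp hz).le]

lemma lintegral_rpow_mul_exp_neg_mul_expMeasure {a s : ℝ} (hr : 0 < r) (hs : 0 ≤ s)
    (ha : 0 < a) :
    ∫⁻ x, ENNReal.ofReal (x ^ (a - 1) * exp (-(s * x))) ∂expMeasure r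
      = ENNReal.ofReal (r * (1 / (r + s)) ^ a * Gamma a) := by
  have htilt : ∀ x,
      ENNReal.ofReal (r * exp (-(r * x))) * ENNReal.ofReal (x ^ (a - 1) * exp (-(s * x)))
        = ENNReal.ofReal r * ENNReal.ofReal (x ^ (a - 1) * exp (-((r + s) * x))) := by
    intro x
    rw [← ENNReal.ofReal_mul hr.le, ← ENNReal.ofReal_mul (by positivity)]
    congr 1
    rw [add_mul, neg_add, exp_add]
    ring
  rw [lintegral_expMeasure]
  simp_rw [htilt]
  rw [lintegral_const_mul' _ _ ENNReal.ofReal_ne_top,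
    lintegral_Ici_rpow_mul_exp_neg_mul ha (by positivity), ← ENNReal.ofReal_mul hr.le, mul_assoc]

lemma expMeasure_prod_setOf_le_add (hr : 0 < r) {t : ℝ} (ht : 0 ≤ t) :
    ((expMeasure r).prod (expMeasure r)) {p | t ≤ p.1 + p.2}
      = ENNReal.ofReal (exp (-(r * t)) * (1 + r * t)) := by
  have := isProbabilityMeasure_expMeasure hr
  have hslice : ∀ x, Prod.mk x ⁻¹' {p : ℝ × ℝ | t ≤ p.1 + p.2} = Ici (t - x) := by
    intro x; ext y; simp [add_comm]
  rw [Measure.prod_apply (measurableSet_le measurable_const (by fun_prop))]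
  simp_rw [hslice, expMeasure_Ici hr]
  rw [lintegral_expMeasure, ← Ico_union_Ici_eq_Ici ht,
    lintegral_union measurableSet_Ici (disjoint_left.mpr fun _ hx hx' ↦ not_le.mpr hx.2 hx')]
  have hbody : ∀ x ∈ Ico 0 t,
      ENNReal.ofReal (r * exp (-(r * x))) * ENNReal.ofReal (exp (-(r * max (t - x) 0)))
        = ENNReal.ofReal (r * exp (-(r * t))) := by
    intro x hx
    rw [max_eq_left (sub_nonneg.mpr hx.2.le), ← ENNReal.ofReal_mul (by positivity), mul_assoc,
      ← exp_add]
    ring_nf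
  have htail : ∀ x ∈ Ici t,
      ENNReal.ofReal (r * exp (-(r * x))) * ENNReal.ofReal (exp (-(r * max (t - x) 0)))
        = exponentialPDF r x := by
    intro x hx
    rw [max_eq_right (sub_nonpos.mpr hx), mul_zero, neg_zero, exp_zero, ENNReal.ofReal_one,
      mul_one, exponentialPDF_of_nonneg (ht.trans hx)]
  rw [setLIntegral_congr_fun measurableSet_Ico hbody,
    setLIntegral_congr_fun measurableSet_Ici htail, setLIntegral_const, Real.volume_Ico,
    ← withDensity_apply _ measurableSet_Ici]
  change _ + expMeasure r (Ici t) = _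
  rw [expMeasure_Ici hr, max_eq_left ht, ← ENNReal.ofReal_mul (by positivity),
    ← ENNReal.ofReal_add (by positivity) (by positivity)]
  congr 1
  ring

lemma lintegral_affine_mul_exp_neg_mul_expMeasure {c β s : ℝ} (hr : 0 < r) (hc : 0 ≤ c)
    (hβ : 0 ≤ β) (hs : 0 ≤ s) :
    ∫⁻ x, ENNReal.ofReal ((c + β * x) * exp (-(s * x))) ∂expMeasure r
      = ENNReal.ofReal (r / (r + s) * (c + β / (r + s))) := by
  have hsplit : ∀ᵐ x ∂expMeasure r, ENNReal.ofReal ((c + β * x) * exp (-(s * x)))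
      = ENNReal.ofReal c * ENNReal.ofReal (x ^ ((1 : ℝ) - 1) * exp (-(s * x)))
        + ENNReal.ofReal β * ENNReal.ofReal (x ^ ((2 : ℝ) - 1) * exp (-(s * x))) := by
    filter_upwards [ae_nonneg_expMeasure] with x hx
    rw [← ENNReal.ofReal_mul hc, ← ENNReal.ofReal_mul hβ,
      ← ENNReal.ofReal_add (by positivity) (by positivity)]
    congr 1
    norm_num
    ring
  rw [lintegral_congr_ae hsplit, lintegral_add_left (by fun_prop),
    lintegral_const_mul' _ _ ENNReal.ofReal_ne_top, lintegral_const_mul' _ _ ENNReal.ofReal_ne_top,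
    lintegral_rpow_mul_exp_neg_mul_expMeasure hr hs one_pos,
    lintegral_rpow_mul_exp_neg_mul_expMeasure hr hs two_pos, ← ENNReal.ofReal_mul hc,
    ← ENNReal.ofReal_mul hβ, ← ENNReal.ofReal_add (by positivity) (by positivity)]
  have : r + s ≠ 0 := by positivity
  norm_num [Gamma_two]
  field_simp

lemma lintegral_affine_mul_exp_neg_mul_prod_expMeasure {α β s : ℝ} (hr : 0 < r) (hα : 0 ≤ α)
    (hβ : 0 ≤ β) (hs : 0 ≤ s) :
    ∫⁻ y, ENNReal.ofReal ((α + β * (y.1 + y.2)) * exp (-(s * (y.1 + y.2))))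
        ∂(expMeasure r).prod (expMeasure r)
      = ENNReal.ofReal ((r / (r + s)) ^ 2 * (α + 2 * β / (r + s))) := by
  have := isProbabilityMeasure_expMeasure hr
  have hinner : ∀ᵐ x ∂expMeasure r,
      ∫⁻ y, ENNReal.ofReal ((α + β * (x + y)) * exp (-(s * (x + y)))) ∂expMeasure r
        = ENNReal.ofReal ((r / (r + s) * (α + β / (r + s)) + r / (r + s) * β * x)
            * exp (-(s * x))) := by
    filter_upwards [ae_nonneg_expMeasure] with x hx
    have hfactor : ∀ y, (α + β * (x + y)) * exp (-(s * (x + y)))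
        = exp (-(s * x)) * (((α + β * x) + β * y) * exp (-(s * y))) := by
      intro y
      rw [mul_add s, neg_add, exp_add]
      ring
    simp_rw [hfactor, ENNReal.ofReal_mul (exp_nonneg _)]
    rw [lintegral_const_mul' _ _ ENNReal.ofReal_ne_top,
      lintegral_affine_mul_exp_neg_mul_expMeasure hr (by positivity) hβ hs,
      ← ENNReal.ofReal_mul (exp_nonneg _)]
    congr 1
    ring
  rw [lintegral_prod _ (by fun_prop), lintegral_congr_ae hinner,
    lintegral_affine_mul_exp_neg_mul_expMeasure hr (by positivity) (by positivity) hs]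
  have : r + s ≠ 0 := by positivity
  congr 1
  field_simp
  ring

lemma prod_expMeasure_setOf_add_mul_le {q a s : ℝ} (hr : 0 < r) (hq : 0 < q) (ha : 0 ≤ a)
    (hs : 0 ≤ s) :
    (((expMeasure r).prod (expMeasure r)).prod ((expMeasure q).prod (expMeasure q)))
        {p | a + s * (p.2.1 + p.2.2) ≤ p.1.1 + p.1.2}
      = ENNReal.ofReal (exp (-(r * a))
          * ((q / (q + r * s)) ^ 2 * (1 + r * a + 2 * (r * s) / (q + r * s)))) := by
  have := isProbabilityMeasure_expMeasure hr
  have := isProbabilityMeasure_expMeasure hq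
  have hslice : ∀ᵐ y ∂(expMeasure q).prod (expMeasure q),
      ((expMeasure r).prod (expMeasure r)) ((fun x ↦ (x, y)) ⁻¹'
          {p : (ℝ × ℝ) × ℝ × ℝ | a + s * (p.2.1 + p.2.2) ≤ p.1.1 + p.1.2})
        = ENNReal.ofReal (exp (-(r * a))) * ENNReal.ofReal
            ((1 + r * a + r * s * (y.1 + y.2)) * exp (-(r * s * (y.1 + y.2)))) := by
    filter_upwards [ae_nonneg_prod_expMeasure hq] with y ⟨hy₁, hy₂⟩
    calc _ = ENNReal.ofReal
            (exp (-(r * (a + s * (y.1 + y.2)))) * (1 + r * (a + s * (y.1 + y.2)))) :=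
          expMeasure_prod_setOf_le_add hr (by positivity)
      _ = _ := by
        rw [← ENNReal.ofReal_mul (exp_nonneg _),
          show r * (a + s * (y.1 + y.2)) = r * a + r * s * (y.1 + y.2) by ring, neg_add, exp_add]
        congr 1
        ring
  rw [Measure.prod_apply_symm (measurableSet_le (by fun_prop) (by fun_prop)),
    lintegral_congr_ae hslice, lintegral_const_mul' _ _ ENNReal.ofReal_ne_top,
    lintegral_affine_mul_exp_neg_mul_prod_expMeasure hq (by positivity) (by positivity)
      (by positivity), ← ENNReal.ofReal_mul (exp_nonneg _)]

end ExpMeasure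

/-- The secrecy outage probability of the two-source decode-and-forward scheme with
partial CSI and error-free intersource channels: for `X = A₁ + A₂` (sum of independent
exponentials of mean `γ_D`) and `Y = B₁ + B₂` (sum of independent exponentials of mean
`γ_E`), with `(A₁,A₂)` independent of `(B₁,B₂)` and `ξ > 1`,
`P(X < ξ(1+Y) - 1)
  = 1 - (γ_D/(γ_D + ξγ_E)³) e^{-(ξ-1)/γ_D} [γ_D(ξ-1+γ_D) + ξγ_E(ξ-1+3γ_D)]`. -/
theorem sop_df_partial_csi {Ω : Type*} [MeasureSpace Ω]
    [IsProbabilityMeasure (ℙ : Measure Ω)]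
    (A₁ A₂ B₁ B₂ : Ω → ℝ) (γD γE ξ : ℝ) (hγD : 0 < γD) (hγE : 0 < γE) (hξ : 1 < ξ)
    (hA₁ : Measure.map A₁ ℙ = expMeasure (1 / γD))
    (hA₂ : Measure.map A₂ ℙ = expMeasure (1 / γD))
    (hB₁ : Measure.map B₁ ℙ = expMeasure (1 / γE))
    (hB₂ : Measure.map B₂ ℙ = expMeasure (1 / γE))
    (hA : IndepFun A₁ A₂) (hB : IndepFun B₁ B₂)
    (hAB : IndepFun (fun ω => (A₁ ω, A₂ ω)) (fun ω => (B₁ ω, B₂ ω))) :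
    ℙ {ω | A₁ ω + A₂ ω < ξ * (1 + (B₁ ω + B₂ ω)) - 1} =
      ENNReal.ofReal (1 - γD / (γD + ξ * γE) ^ 3 * Real.exp (-(ξ - 1) / γD) *
        (γD * (ξ - 1 + γD) + ξ * γE * (ξ - 1 + 3 * γD))) := by
  have hr : 0 < 1 / γD := by positivity
  have hq : 0 < 1 / γE := by positivity
  have := isProbabilityMeasure_expMeasure hr
  have := isProbabilityMeasure_expMeasure hq
  have hA₁m : AEMeasurable A₁ := .of_map_ne_zero (hA₁ ▸ IsProbabilityMeasure.ne_zero _)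
  have hA₂m : AEMeasurable A₂ := .of_map_ne_zero (hA₂ ▸ IsProbabilityMeasure.ne_zero _)
  have hB₁m : AEMeasurable B₁ := .of_map_ne_zero (hB₁ ▸ IsProbabilityMeasure.ne_zero _)
  have hB₂m : AEMeasurable B₂ := .of_map_ne_zero (hB₂ ▸ IsProbabilityMeasure.ne_zero _)
  have hS : MeasurableSet {p : (ℝ × ℝ) × ℝ × ℝ | ξ - 1 + ξ * (p.2.1 + p.2.2) ≤ p.1.1 + p.1.2} :=
    measurableSet_le (by fun_prop) (by fun_prop)
  have hevent : {ω | A₁ ω + A₂ ω < ξ * (1 + (B₁ ω + B₂ ω)) - 1}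
      = (fun ω ↦ ((A₁ ω, A₂ ω), (B₁ ω, B₂ ω))) ⁻¹'
          {p : (ℝ × ℝ) × ℝ × ℝ | ξ - 1 + ξ * (p.2.1 + p.2.2) ≤ p.1.1 + p.1.2}ᶜ := by
    ext ω
    simp only [mem_ofPred_eq, mem_preimage, mem_compl_iff, not_le]
    constructor <;> intro h <;> linarith
  rw [hevent, ← Measure.map_apply_of_aemeasurable (by fun_prop) hS.compl,
    map_prodMk_prodMk_eq_prod_of_indepFun hA₁m hA₂m hB₁m hB₂m hA hB hAB, hA₁, hA₂, hB₁, hB₂,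
    prob_compl_eq_one_sub hS, prod_expMeasure_setOf_add_mul_le hr hq (by linarith) (by linarith),
    ← ENNReal.ofReal_one, ← ENNReal.ofReal_sub _ (by positivity),
    show -(ξ - 1) / γD = -(1 / γD * (ξ - 1)) by ring]
  congr 2
  field_simp
  ring
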